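/- arXiv:1107.1052 — 3 statements merged into one kernel-verified Lean document; each statement's English description precedes it below -/
import Mathlib

section
/- Let H1 and H2 be connected Eulerian subgraphs (connected spanning multigraphs on their vertex sets in which every vertex has even degree) of a graph of maximum degree at most 3, sharing at least two common vertices. Let H3 be the multigraph union of H1 and H2 (summing edge multiplicities). Then there exist two edges of H3 whose removal leaves H3 connected and Eulerian (all degrees even). -/
open Classical in
/-- Degree of a vertex in a multigraph given by a multiset of (non-loop) edges. -/
noncomputable def mDegree {V : Type} (E : Multiset (Sym2 V)) (v : V) : ℕ :=
  Multiset.card (E.filter fun e => v ∈ e)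

/-- The support of an edge multiset: vertices incident to at least one edge. -/
def mSupport {V : Type} (E : Multiset (Sym2 V)) : Set V :=
  {v | ∃ e ∈ E, v ∈ e}

/-- The simple graph underlying a multiset of edges (used for connectivity). -/
def mGraph {V : Type} (E : Multiset (Sym2 V)) : SimpleGraph V :=
  SimpleGraph.fromEdgeSet {e | e ∈ E}

namespace St5

variable {V : Type}

lemma mdeg_add (A B : Multiset (Sym2 V)) (x : V) :
    mDegree (A + B) x = mDegree A x + mDegree B x := by
  classical
  simp [mDegree, Multiset.filter_add]

lemma mdeg_cons [DecidableEq V] (f : Sym2 V) (E : Multiset (Sym2 V)) (x : V) :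
    mDegree (f ::ₘ E) x = (if x ∈ f then 1 else 0) + mDegree E x := by
  by_cases h : x ∈ f <;> simp [mDegree, Multiset.filter_cons, h, add_comm]

lemma mdeg_pair [DecidableEq V] (e : Sym2 V) (x : V) :
    mDegree ({e, e} : Multiset (Sym2 V)) x = if x ∈ e then 2 else 0 := by
  by_cases h : x ∈ e <;>
    simp [mDegree, show ({e, e} : Multiset (Sym2 V)) = e ::ₘ e ::ₘ 0 from rfl,
      Multiset.filter_cons, Multiset.filter_singleton, h]

lemma mem_supp_iff (E : Multiset (Sym2 V)) (x : V) :
    x ∈ mSupport E ↔ 0 < mDegree E x := by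
  classical
  simp only [mSupport, Set.mem_setOf_eq, mDegree, Multiset.card_pos]

  constructor
  · rintro ⟨f, hf, hxf⟩
    rw [Ne, Multiset.eq_zero_iff_forall_notMem]
    push_neg
    exact ⟨f, Multiset.mem_filter.2 ⟨hf, hxf⟩⟩
  · intro h
    obtain ⟨f, hf⟩ := Multiset.exists_mem_of_ne_zero h
    exact ⟨f, (Multiset.mem_filter.1 hf).1, (Multiset.mem_filter.1 hf).2⟩

lemma supp_add (A B : Multiset (Sym2 V)) :
    mSupport (A + B) = mSupport A ∪ mSupport B := by
  ext x
  simp only [mSupport, Set.mem_setOf_eq, Multiset.mem_add, Set.mem_union]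
  constructor
  · rintro ⟨f, hf | hf, hx⟩
    · exact Or.inl ⟨f, hf, hx⟩
    · exact Or.inr ⟨f, hf, hx⟩
  · rintro (⟨f, hf, hx⟩ | ⟨f, hf, hx⟩)
    · exact ⟨f, Or.inl hf, hx⟩
    · exact ⟨f, Or.inr hf, hx⟩

lemma two_le_deg {E : Multiset (Sym2 V)} {x : V} (he : Even (mDegree E x))
    (hx : x ∈ mSupport E) : 2 ≤ mDegree E x := by
  have := (mem_supp_iff E x).1 hx
  obtain ⟨k, hk⟩ := he
  omega

lemma mGraph_adj {E : Multiset (Sym2 V)} {x y : V} :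
    (mGraph E).Adj x y ↔ s(x, y) ∈ E ∧ x ≠ y := by
  simp [mGraph, SimpleGraph.fromEdgeSet_adj]

lemma mGraph_mono {E F : Multiset (Sym2 V)} (h : E ≤ F) : mGraph E ≤ mGraph F :=
  SimpleGraph.fromEdgeSet_mono (fun f hf => Multiset.mem_of_le h hf)

lemma edge_at {G : SimpleGraph V} {e : Sym2 V} {u : V} (he : e ∈ G.edgeSet)
    (hu : u ∈ e) : ∃ w, G.Adj u w ∧ e = s(u, w) := by
  induction e using Sym2.ind with
  | _ p q =>
    have hadj : G.Adj p q := he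
    rcases Sym2.mem_iff.1 hu with h | h
    · subst h; exact ⟨q, hadj, rfl⟩
    · subst h; exact ⟨p, hadj.symm, Sym2.eq_swap⟩

lemma cnt_le_deg [DecidableEq V] {e : Sym2 V} {w : V} (hw : w ∈ e) (E : Multiset (Sym2 V)) :
    E.count e ≤ mDegree E w := by
  classical
  induction E using Multiset.induction with
  | empty => simp [mDegree]
  | cons f t ih =>
    rw [Multiset.count_cons, mdeg_cons]
    by_cases hef : e = f
    · rw [if_pos hef, if_pos (hef ▸ hw)]; omega
    · rw [if_neg hef]
      by_cases hwf : w ∈ f <;> simp [hwf] <;> omega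

lemma pair_le [DecidableEq V] {e : Sym2 V} {E : Multiset (Sym2 V)}
    (h : 2 ≤ E.count e) : ({e, e} : Multiset (Sym2 V)) ≤ E := by
  rw [Multiset.le_iff_count]
  intro a
  by_cases ha : a = e
  · subst ha; simpa using h
  · simp [Multiset.count_cons, Multiset.count_singleton, ha]

lemma count_pair [DecidableEq V] (e a : Sym2 V) :
    Multiset.count a ({e, e} : Multiset (Sym2 V)) = if a = e then 2 else 0 := by
  by_cases ha : a = e
  · subst ha; simp
  · simp [Multiset.count_cons, Multiset.count_singleton, ha]

lemma mdeg_sub_pair [DecidableEq V] {e : Sym2 V} {E : Multiset (Sym2 V)}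
    (h : ({e, e} : Multiset (Sym2 V)) ≤ E) (x : V) :
    mDegree (E - {e, e}) x + (if x ∈ e then 2 else 0) = mDegree E x := by
  conv_rhs => rw [← tsub_add_cancel_of_le h]
  rw [mdeg_add, mdeg_pair]

lemma parity [DecidableEq V] {e : Sym2 V} {E : Multiset (Sym2 V)}
    (h : ({e, e} : Multiset (Sym2 V)) ≤ E) (hev : ∀ x, Even (mDegree E x)) :
    ∀ x, Even (mDegree (E - {e, e}) x) := by
  intro x
  have := mdeg_sub_pair h x
  obtain ⟨k, hk⟩ := hev x
  split_ifs at this with hx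
  · exact ⟨k - 1, by omega⟩
  · exact ⟨k, by omega⟩

lemma supp_sub_pair [DecidableEq V] {e : Sym2 V} {E : Multiset (Sym2 V)}
    (h : ({e, e} : Multiset (Sym2 V)) ≤ E) (h4 : ∀ x ∈ e, 4 ≤ mDegree E x) :
    mSupport (E - {e, e}) = mSupport E := by
  ext x
  rw [mem_supp_iff, mem_supp_iff]
  have h1 := mdeg_sub_pair h x
  by_cases hxe : x ∈ e
  · have h2 := h4 x hxe
    rw [if_pos hxe] at h1
    omega
  · rw [if_neg hxe] at h1
    omega


open Finset in
lemma even_sum [DecidableEq V] (S : Finset V) (E : Multiset (Sym2 V))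
    (hnl : ∀ f ∈ E, ¬ f.IsDiag)
    (hcl : ∀ f ∈ E, ∀ p q : V, f = s(p, q) → p ∈ S → q ∈ S) :
    Even (∑ x ∈ S, mDegree E x) := by
  induction E using Multiset.induction with
  | empty => simp [mDegree]
  | cons f t ih =>
    have hsum : ∑ x ∈ S, mDegree (f ::ₘ t) x
        = (∑ x ∈ S, if x ∈ f then 1 else 0) + ∑ x ∈ S, mDegree t x := by
      rw [← Finset.sum_add_distrib]
      exact Finset.sum_congr rfl fun x _ => mdeg_cons f t x
    rw [hsum]
    have ht : Even (∑ x ∈ S, mDegree t x) :=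
      ih (fun g hg => hnl g (Multiset.mem_cons_of_mem hg))
        (fun g hg => hcl g (Multiset.mem_cons_of_mem hg))
    refine Even.add ?_ ht
    induction f using Sym2.ind with
    | _ p q =>
      have hpq : p ≠ q := fun h => hnl _ (Multiset.mem_cons_self _ _) (by simp [h])
      have hsum2 : (∑ x ∈ S, if x ∈ s(p, q) then 1 else 0)
          = (S.filter (fun x => x ∈ s(p, q))).card := by
        rw [Finset.card_filter]
      rw [hsum2]
      by_cases hp : p ∈ S
      · have hq : q ∈ S := hcl _ (Multiset.mem_cons_self _ _) p q rfl hp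
        have : S.filter (fun x => x ∈ s(p, q)) = {p, q} := by
          ext z
          simp only [Finset.mem_filter, Sym2.mem_iff, Finset.mem_insert, Finset.mem_singleton]
          constructor
          · rintro ⟨_, h⟩; exact h
          · rintro (rfl | rfl) <;> simp [hp, hq]
        rw [this, Finset.card_insert_of_notMem (by simpa using hpq), Finset.card_singleton]
        exact ⟨1, rfl⟩
      · have hq : q ∉ S := fun hq =>
          hp (hcl _ (Multiset.mem_cons_self _ _) q p (Sym2.eq_swap) hq)
        have : S.filter (fun x => x ∈ s(p, q)) = ∅ := by
          ext z
          simp only [Finset.mem_filter, Sym2.mem_iff, Finset.notMem_empty, iff_false, not_and]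
          intro hz hor
          rcases hor with rfl | rfl
          · exact hp hz
          · exact hq hz
        rw [this]
        simp

lemma transfer {E : Multiset (Sym2 V)} {E' : Multiset (Sym2 V)}
    (hsub : ∀ f, f ∈ E → f ∈ E' ∨ ∃ p q : V, f = s(p, q) ∧ (mGraph E').Reachable p q) :
    ∀ {x y : V}, (mGraph E).Walk x y → (mGraph E').Reachable x y := by
  intro x y p
  induction p with
  | nil => exact SimpleGraph.Reachable.refl _
  | cons h q ih =>
    rename_i a b c
    have hab : s(a, b) ∈ E ∧ a ≠ b := mGraph_adj.1 h
    have step : (mGraph E').Reachable a b := by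
      rcases hsub _ hab.1 with hm | ⟨p', q', hpq, hr⟩
      · exact (mGraph_adj.2 ⟨hm, hab.2⟩).reachable
      · rcases Sym2.eq_iff.1 hpq with ⟨rfl, rfl⟩ | ⟨rfl, rfl⟩
        · exact hr
        · exact hr.symm
    exact step.trans ih

/-- Removing one copy of an edge from a connected even multigraph keeps it connected. -/
lemma bridge [Fintype V] [DecidableEq V] {E : Multiset (Sym2 V)} {a b : V} (hab : a ≠ b)
    (he : s(a, b) ∈ E)
    (hnl : ∀ f ∈ E, ¬ f.IsDiag)
    (heven : ∀ x, Even (mDegree E x))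
    (hconn : ∀ x ∈ mSupport E, ∀ y ∈ mSupport E, (mGraph E).Reachable x y) :
    ∀ x ∈ mSupport E, ∀ y ∈ mSupport E, (mGraph (E.erase s(a, b))).Reachable x y := by
  classical
  set e := s(a, b) with hedef
  set E' := E.erase e with hE'
  -- key: a and b are reachable in E'
  have key : (mGraph E').Reachable a b := by
    by_cases hc : e ∈ E'
    · exact (mGraph_adj.2 ⟨hc, hab⟩).reachable
    · -- parity argument
      by_contra hnr
      set S : Finset V := Finset.univ.filter (fun x => (mGraph E').Reachable a x) with hS
      have haS : a ∈ S := by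
        simp only [hS, Finset.mem_filter, Finset.mem_univ, true_and]
        exact SimpleGraph.Reachable.refl a
      have hbS : b ∉ S := by simp [hS]; exact fun h => hnr h
      have hcl : ∀ f ∈ E', ∀ p q : V, f = s(p, q) → p ∈ S → q ∈ S := by
        intro f hf p q hfpq hp
        simp only [hS, Finset.mem_filter, Finset.mem_univ, true_and] at hp ⊢
        refine hp.trans ?_
        have hne : p ≠ q := by
          intro h
          exact hnl f (Multiset.mem_of_mem_erase hf) (by simp [hfpq, h])
        exact (mGraph_adj.2 ⟨hfpq ▸ hf, hne⟩).reachable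
      have hev : Even (∑ x ∈ S, mDegree E' x) :=
        even_sum S E' (fun f hf => hnl f (Multiset.mem_of_mem_erase hf)) hcl
      -- but the sum is odd
      have hEdecomp : E = e ::ₘ E' := (Multiset.cons_erase he).symm
      have hodd : Odd (mDegree E' a) := by
        have h1 : mDegree E a = 1 + mDegree E' a := by
          rw [hEdecomp, mdeg_cons, if_pos (by simp [hedef])]
        obtain ⟨k, hk⟩ := heven a
        exact ⟨k - 1, by omega⟩
      have hrest : ∀ x ∈ S.erase a, Even (mDegree E' x) := by
        intro x hx
        have hxa : x ≠ a := Finset.ne_of_mem_erase hx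
        have hxb : x ≠ b := fun h => hbS (h ▸ Finset.mem_of_mem_erase hx)
        have hxe : x ∉ e := by simp [hedef, Sym2.mem_iff, hxa, hxb]
        have h1 : mDegree E x = mDegree E' x := by
          rw [hEdecomp, mdeg_cons, if_neg hxe, zero_add]
        exact h1 ▸ heven x
      have hsplit : ∑ x ∈ S, mDegree E' x
          = mDegree E' a + ∑ x ∈ S.erase a, mDegree E' x :=
        (Finset.add_sum_erase S _ haS).symm
      have hrest_even : Even (∑ x ∈ S.erase a, mDegree E' x) := by
        rw [even_iff_two_dvd]
        refine Finset.dvd_sum fun x hx => ?_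
        rw [← even_iff_two_dvd]
        exact hrest x hx
      rw [hsplit] at hev
      obtain ⟨k1, hk1⟩ := hodd
      obtain ⟨k2, hk2⟩ := hrest_even
      obtain ⟨k3, hk3⟩ := hev
      omega
  intro x hx y hy
  have hsub : ∀ f, f ∈ E → f ∈ E' ∨ ∃ p q : V, f = s(p, q) ∧ (mGraph E').Reachable p q := by
    intro f hf
    by_cases hfe : f = e
    · exact Or.inr ⟨a, b, hfe, key⟩
    · exact Or.inl (Multiset.mem_erase_of_ne hfe |>.2 hf)
  exact (hconn x hx y hy).elim (transfer hsub)

/-- Truncation: if all edges at `u` are copies of `e = s(u,w)`, any walk to `u`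
from `x ≠ u` yields reachability to `w` avoiding `e`. -/
lemma trunc [DecidableEq V] {E : Multiset (Sym2 V)} {u w : V}
    (hall : ∀ f ∈ E, u ∈ f → f = s(u, w)) :
    ∀ x : V, x ≠ u → (mGraph E).Walk x u →
      (mGraph (E - {s(u, w), s(u, w)})).Reachable x w := by
  classical
  have key : ∀ (x y : V), (mGraph E).Walk x y → y = u → x ≠ u →
      (mGraph (E - {s(u, w), s(u, w)})).Reachable x w := by
    intro x y p
    induction p with
    | nil => intro hyu hx; exact absurd hyu hx
    | cons h q ih =>
      rename_i c d y'
      intro hyu hx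
      have hcd : s(c, d) ∈ E ∧ c ≠ d := mGraph_adj.1 h
      by_cases hfe : s(c, d) = s(u, w)
      · rcases Sym2.eq_iff.1 hfe with ⟨rfl, rfl⟩ | ⟨rfl, rfl⟩
        · exact absurd rfl hx
        · exact SimpleGraph.Reachable.refl _
      · have hdu : d ≠ u := by
          rintro rfl
          exact hfe (hall _ hcd.1 ((Sym2.mem_iff).2 (Or.inr rfl)))
        have hmem : s(c, d) ∈ E - ({s(u, w), s(u, w)} : Multiset (Sym2 V)) := by
          rw [← Multiset.count_pos, Multiset.count_sub, count_pair, if_neg hfe]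
          have := Multiset.count_pos.2 hcd.1
          omega
        exact ((mGraph_adj.2 ⟨hmem, hcd.2⟩).reachable).trans (ih hyu hdu)
  intro x hx p
  exact key x u p rfl hx

lemma no_edge_reach {E : Multiset (Sym2 V)} {w x : V}
    (h : ∀ f ∈ E, w ∉ f) (hx : x ≠ w) : ¬ (mGraph E).Reachable x w := by
  intro hr
  refine hr.elim fun p => ?_
  have key : ∀ (c d : V), (mGraph E).Walk c d → d = w → c = w := by
    intro c d p
    induction p with
    | nil => exact fun hh => hh
    | cons hadj q ih =>
      intro hbw
      have hd := ih hbw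
      exfalso
      apply h _ (mGraph_adj.1 hadj).1
      rw [← hd]
      exact Sym2.mem_mk_right _ _
  exact hx (key x w p rfl)


lemma count_eq_card_filter [DecidableEq V] (a : Sym2 V) (s : Multiset (Sym2 V)) :
    Multiset.count a s = Multiset.card (Multiset.filter (fun x => a = x) s) := by
  rw [Multiset.count, Multiset.countP_eq_card_filter]

lemma count_eq_deg [DecidableEq V] {u : V} {e : Sym2 V} :
    ∀ {E : Multiset (Sym2 V)}, (∀ f ∈ E, u ∈ f ↔ f = e) → Multiset.count e E = mDegree E u := by
  intro E
  induction E using Multiset.induction with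
  | empty => intro _; simp [mDegree]
  | cons f t ih =>
    intro h
    rw [Multiset.count_cons, mdeg_cons, ih (fun g hg => h g (Multiset.mem_cons_of_mem hg))]
    have hf := h f (Multiset.mem_cons_self f t)
    by_cases hfe : f = e
    · rw [if_pos hfe.symm, if_pos (hf.2 hfe)]
      omega
    · rw [if_neg (fun hh => hfe hh.symm), if_neg (fun hu => hfe (hf.1 hu))]
      omega

lemma rep_of_mem {e : Sym2 V} {u : V} (hnl : ¬ e.IsDiag) (hu : u ∈ e) :
    ∃ w, u ≠ w ∧ e = s(u, w) := by
  induction e using Sym2.ind with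
  | _ p q =>
    rcases Sym2.mem_iff.1 hu with rfl | rfl
    · exact ⟨q, fun h => hnl (by simp [h]), rfl⟩
    · exact ⟨p, fun h => hnl (by simp [h]), Sym2.eq_swap⟩

lemma sub_add_left [DecidableEq V] {S A : Multiset (Sym2 V)} (h : S ≤ A)
    (B : Multiset (Sym2 V)) : A + B - S = (A - S) + B := by
  ext f
  rw [Multiset.count_sub, Multiset.count_add, Multiset.count_add, Multiset.count_sub]
  have := Multiset.le_iff_count.1 h f
  omega

lemma caseB [DecidableEq V]
    {H1 H2 : Multiset (Sym2 V)}
    (hnl1 : ∀ f ∈ H1, ¬ f.IsDiag)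
    (heven1 : ∀ x, Even (mDegree H1 x)) (heven2 : ∀ x, Even (mDegree H2 x))
    (hconn1 : ∀ x ∈ mSupport H1, ∀ y ∈ mSupport H1, (mGraph H1).Reachable x y)
    (hconn2 : ∀ x ∈ mSupport H2, ∀ y ∈ mSupport H2, (mGraph H2).Reachable x y)
    {u v : V} (huv : u ≠ v)
    (hu1 : u ∈ mSupport H1) (hu2 : u ∈ mSupport H2)
    (hv1 : v ∈ mSupport H1) (hv2 : v ∈ mSupport H2)
    {e : Sym2 V} (he1 : e ∈ H1) (hue : u ∈ e)
    (hall : ∀ f ∈ H1, u ∈ f → f = e) (he2 : e ∉ H2) :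
    ∃ e₁ e₂ : Sym2 V, ({e₁, e₂} : Multiset (Sym2 V)) ≤ H1 + H2 ∧
      (∀ w, Even (mDegree ((H1 + H2 - {e₁, e₂} : Multiset (Sym2 V))) w)) ∧
      mSupport ((H1 + H2 - {e₁, e₂} : Multiset (Sym2 V))) = mSupport (H1 + H2) ∧
      (∀ x ∈ mSupport (H1 + H2), ∀ y ∈ mSupport (H1 + H2),
        (mGraph (H1 + H2 - {e₁, e₂} : Multiset (Sym2 V))).Reachable x y) := by
  classical
  obtain ⟨w, huw, rfl⟩ := rep_of_mem (hnl1 e he1) hue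
  set e := s(u, w) with hedef
  have hvu : v ≠ u := huv.symm
  -- basic degree facts
  have heven3 : ∀ x, Even (mDegree (H1 + H2) x) := fun x => by
    rw [mdeg_add]; exact (heven1 x).add (heven2 x)
  have hdeg1u : 2 ≤ mDegree H1 u := two_le_deg (heven1 u) hu1
  have hdeg2u : 2 ≤ mDegree H2 u := two_le_deg (heven2 u) hu2
  have hw1 : w ∈ mSupport H1 := ⟨e, he1, Sym2.mem_mk_right u w⟩
  have hdeg1w : 2 ≤ mDegree H1 w := two_le_deg (heven1 w) hw1
  -- the count of e in H1 equals the degree of u in H1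
  have hcnt : Multiset.count e H1 = mDegree H1 u :=
    count_eq_deg fun f hf => ⟨fun huf => hall f hf huf, fun h => h ▸ hue⟩
  have hcge2 : 2 ≤ Multiset.count e H1 := hcnt ▸ hdeg1u
  have hcnt2 : Multiset.count e H2 = 0 := Multiset.count_eq_zero.2 he2
  have hpair1 : ({e, e} : Multiset (Sym2 V)) ≤ H1 := pair_le hcge2
  have hpairs : ({e, e} : Multiset (Sym2 V)) ≤ H1 + H2 :=
    hpair1.trans (Multiset.le_add_right H1 H2)
  -- degree of w in H3 is at least 4
  have h4w : 4 ≤ mDegree (H1 + H2) w := by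
    by_cases h3 : 3 ≤ Multiset.count e H1
    · have h1 : 3 ≤ mDegree H1 w := h3.trans (cnt_le_deg (Sym2.mem_mk_right u w) H1)
      obtain ⟨k, hk⟩ := heven1 w
      rw [mdeg_add]
      omega
    · have hc2 : Multiset.count e H1 = 2 := by omega
      by_cases hw4 : 4 ≤ mDegree H1 w
      · rw [mdeg_add]; omega
      · -- degree of w in H1 is exactly 2, so H1 lives on {u, w} and w = v
        have hdw2 : mDegree H1 w = 2 := by
          obtain ⟨k, hk⟩ := heven1 w
          omega
        have hallw : ∀ f ∈ H1, w ∈ f → f = e := by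
          intro f hf hwf
          by_contra hfe
          have hd : H1 = f ::ₘ H1.erase f := (Multiset.cons_erase hf).symm
          have h1 : mDegree H1 w = 1 + mDegree (H1.erase f) w := by
            conv_lhs => rw [hd]
            rw [mdeg_cons, if_pos hwf]
          have h2 : Multiset.count e (H1.erase f) = 2 := by
            rw [Multiset.count_erase_of_ne (fun h => hfe h.symm), hc2]
          have h3 := (h2 ▸ cnt_le_deg (Sym2.mem_mk_right u w) (H1.erase f) :
            2 ≤ mDegree (H1.erase f) w)
          omega
        have hno_w : ∀ f ∈ H1 - ({e, e} : Multiset (Sym2 V)), w ∉ f := by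
          intro f hf hwf
          have hfH1 : f ∈ H1 := Multiset.mem_of_le tsub_le_self hf
          have hfe : f ≠ e := by
            rintro rfl
            have := Multiset.count_pos.2 hf
            rw [Multiset.count_sub, count_pair, if_pos rfl, hc2] at this
            omega
          exact hfe (hallw f hfH1 hwf)
        have hsupp1 : ∀ x ∈ mSupport H1, x = u ∨ x = w := by
          intro x hx
          by_contra hcon
          push_neg at hcon
          have hr : (mGraph (H1 - ({e, e} : Multiset (Sym2 V)))).Reachable x w :=
            (hconn1 x hx u hu1).elim (trunc hall x hcon.1)
          exact no_edge_reach hno_w hcon.2 hr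
        have hwv : w = v := by
          rcases hsupp1 v hv1 with h | h
          · exact absurd h hvu
          · exact h.symm
        have hdeg2w : 2 ≤ mDegree H2 w := two_le_deg (heven2 w) (hwv ▸ hv2)
        rw [mdeg_add]
        omega
  have h4 : ∀ x ∈ e, 4 ≤ mDegree (H1 + H2) x := by
    intro x hx
    rcases Sym2.mem_iff.1 hx with rfl | rfl
    · rw [mdeg_add]; omega
    · exact h4w
  -- connectivity
  have hH1R : H1 - ({e, e} : Multiset (Sym2 V)) ≤ H1 + H2 - {e, e} := by
    rw [sub_add_left hpair1]
    exact Multiset.le_add_right _ _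
  have hH2R : H2 ≤ H1 + H2 - ({e, e} : Multiset (Sym2 V)) := by
    rw [sub_add_left hpair1]
    exact Multiset.le_add_left _ _
  have trunc1 : ∀ x ∈ mSupport H1, x ≠ u →
      (mGraph (H1 + H2 - ({e, e} : Multiset (Sym2 V)))).Reachable x w := by
    intro x hx hxu
    exact ((hconn1 x hx u hu1).elim (trunc hall x hxu)).mono (mGraph_mono hH1R)
  have hwu : (mGraph (H1 + H2 - ({e, e} : Multiset (Sym2 V)))).Reachable w u := by
    have h1 := trunc1 v hv1 hvu
    exact h1.symm.trans ((hconn2 v hv2 u hu2).mono (mGraph_mono hH2R))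
  have reachu : ∀ x ∈ mSupport (H1 + H2),
      (mGraph (H1 + H2 - ({e, e} : Multiset (Sym2 V)))).Reachable x u := by
    intro x hx
    rcases (supp_add H1 H2 ▸ hx : x ∈ mSupport H1 ∪ mSupport H2) with hx1 | hx2
    · by_cases hxu : x = u
      · subst hxu; exact SimpleGraph.Reachable.refl _
      · exact (trunc1 x hx1 hxu).trans hwu
    · exact (hconn2 x hx2 u hu2).mono (mGraph_mono hH2R)
  exact ⟨e, e, hpairs, parity hpairs heven3, supp_sub_pair hpairs h4,
    fun x hx y hy => (reachu x hx).trans (reachu y hy).symm⟩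


lemma caseA [Fintype V] [DecidableEq V]
    {H1 H2 : Multiset (Sym2 V)}
    (hnl1 : ∀ f ∈ H1, ¬ f.IsDiag) (hnl2 : ∀ f ∈ H2, ¬ f.IsDiag)
    (heven1 : ∀ x, Even (mDegree H1 x)) (heven2 : ∀ x, Even (mDegree H2 x))
    (hconn1 : ∀ x ∈ mSupport H1, ∀ y ∈ mSupport H1, (mGraph H1).Reachable x y)
    (hconn2 : ∀ x ∈ mSupport H2, ∀ y ∈ mSupport H2, (mGraph H2).Reachable x y)
    {u : V} (hu1 : u ∈ mSupport H1) (hu2 : u ∈ mSupport H2)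
    {e : Sym2 V} (he1 : e ∈ H1) (he2 : e ∈ H2) (hue : u ∈ e) :
    ∃ e₁ e₂ : Sym2 V, ({e₁, e₂} : Multiset (Sym2 V)) ≤ H1 + H2 ∧
      (∀ w, Even (mDegree ((H1 + H2 - {e₁, e₂} : Multiset (Sym2 V))) w)) ∧
      mSupport ((H1 + H2 - {e₁, e₂} : Multiset (Sym2 V))) = mSupport (H1 + H2) ∧
      (∀ x ∈ mSupport (H1 + H2), ∀ y ∈ mSupport (H1 + H2),
        (mGraph (H1 + H2 - {e₁, e₂} : Multiset (Sym2 V))).Reachable x y) := by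
  classical
  obtain ⟨w, huw, rfl⟩ := rep_of_mem (hnl1 e he1) hue
  set e := s(u, w) with hedef
  have hw1 : w ∈ mSupport H1 := ⟨e, he1, Sym2.mem_mk_right u w⟩
  have hw2 : w ∈ mSupport H2 := ⟨e, he2, Sym2.mem_mk_right u w⟩
  have hc1 : 1 ≤ Multiset.count e H1 := Multiset.count_pos.2 he1
  have hc2 : 1 ≤ Multiset.count e H2 := Multiset.count_pos.2 he2
  have hpairs : ({e, e} : Multiset (Sym2 V)) ≤ H1 + H2 := by
    refine pair_le ?_
    rw [Multiset.count_add]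
    omega
  have heven3 : ∀ x, Even (mDegree (H1 + H2) x) := fun x => by
    rw [mdeg_add]; exact (heven1 x).add (heven2 x)
  have h4 : ∀ x ∈ e, 4 ≤ mDegree (H1 + H2) x := by
    intro x hx
    rw [mdeg_add]
    rcases Sym2.mem_iff.1 hx with rfl | rfl
    · have := two_le_deg (heven1 x) hu1
      have := two_le_deg (heven2 x) hu2
      omega
    · have := two_le_deg (heven1 x) hw1
      have := two_le_deg (heven2 x) hw2
      omega
  have decomp : H1 + H2 - ({e, e} : Multiset (Sym2 V)) = H1.erase e + H2.erase e := by
    ext f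
    rw [Multiset.count_sub, Multiset.count_add, Multiset.count_add, count_pair]
    by_cases hfe : f = e
    · subst hfe
      rw [Multiset.count_erase_self, Multiset.count_erase_self, if_pos rfl]
      omega
    · rw [Multiset.count_erase_of_ne hfe, Multiset.count_erase_of_ne hfe, if_neg hfe]
      omega
  have hle1 : H1.erase e ≤ H1 + H2 - ({e, e} : Multiset (Sym2 V)) := by
    rw [decomp]; exact Multiset.le_add_right _ _
  have hle2 : H2.erase e ≤ H1 + H2 - ({e, e} : Multiset (Sym2 V)) := by
    rw [decomp]; exact Multiset.le_add_left _ _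
  have reachu : ∀ x ∈ mSupport (H1 + H2),
      (mGraph (H1 + H2 - ({e, e} : Multiset (Sym2 V)))).Reachable x u := by
    intro x hx
    rcases (supp_add H1 H2 ▸ hx : x ∈ mSupport H1 ∪ mSupport H2) with hx1 | hx2
    · exact (bridge huw he1 hnl1 heven1 hconn1 x hx1 u hu1).mono (mGraph_mono hle1)
    · exact (bridge huw he2 hnl2 heven2 hconn2 x hx2 u hu2).mono (mGraph_mono hle2)
  exact ⟨e, e, hpairs, parity hpairs heven3, supp_sub_pair hpairs h4,
    fun x hx y hy => (reachu x hx).trans (reachu y hy).symm⟩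

end St5


open St5 in
/-- If `H1` and `H2` are connected Eulerian sub-multigraphs of a subcubic
graph sharing at least two vertices, then two edges can be removed from their multigraph
sum `H3 = H1 + H2` so that it stays connected (on the same support) and Eulerian. -/
theorem stmt5 {V : Type} [Fintype V] [DecidableEq V] (G : SimpleGraph V)
    (hsub : ∀ v : V, (G.neighborSet v).ncard ≤ 3)
    (H1 H2 : Multiset (Sym2 V))
    (hE1 : ∀ e ∈ H1, e ∈ G.edgeSet) (hE2 : ∀ e ∈ H2, e ∈ G.edgeSet)
    (heven1 : ∀ v, Even (mDegree H1 v)) (heven2 : ∀ v, Even (mDegree H2 v))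
    (hconn1 : ∀ u ∈ mSupport H1, ∀ v ∈ mSupport H1, (mGraph H1).Reachable u v)
    (hconn2 : ∀ u ∈ mSupport H2, ∀ v ∈ mSupport H2, (mGraph H2).Reachable u v)
    (u v : V) (huv : u ≠ v)
    (hu : u ∈ mSupport H1 ∩ mSupport H2) (hv : v ∈ mSupport H1 ∩ mSupport H2) :
    ∃ e₁ e₂ : Sym2 V, ({e₁, e₂} : Multiset (Sym2 V)) ≤ H1 + H2 ∧
      (∀ w, Even (mDegree ((H1 + H2 - {e₁, e₂} : Multiset (Sym2 V))) w)) ∧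
      mSupport ((H1 + H2 - {e₁, e₂} : Multiset (Sym2 V))) = mSupport (H1 + H2) ∧
      (∀ x ∈ mSupport (H1 + H2), ∀ y ∈ mSupport (H1 + H2),
        (mGraph (H1 + H2 - {e₁, e₂} : Multiset (Sym2 V))).Reachable x y) := by
  classical
  obtain ⟨hu1, hu2⟩ := hu
  obtain ⟨hv1, hv2⟩ := hv
  have hnl1 : ∀ f ∈ H1, ¬ f.IsDiag := fun f hf => G.not_isDiag_of_mem_edgeSet (hE1 f hf)
  have hnl2 : ∀ f ∈ H2, ¬ f.IsDiag := fun f hf => G.not_isDiag_of_mem_edgeSet (hE2 f hf)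
  set A1 := (H1.filter (fun f => u ∈ f)).toFinset with hA1
  set A2 := (H2.filter (fun f => u ∈ f)).toFinset with hA2
  have hmemA1 : ∀ f, f ∈ A1 ↔ f ∈ H1 ∧ u ∈ f := by
    intro f; rw [hA1, Multiset.mem_toFinset, Multiset.mem_filter]
  have hmemA2 : ∀ f, f ∈ A2 ↔ f ∈ H2 ∧ u ∈ f := by
    intro f; rw [hA2, Multiset.mem_toFinset, Multiset.mem_filter]
  by_cases hcom : (A1 ∩ A2).Nonempty
  · obtain ⟨e, he⟩ := hcom
    rw [Finset.mem_inter] at he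
    exact caseA hnl1 hnl2 heven1 heven2 hconn1 hconn2 hu1 hu2
      ((hmemA1 e).1 he.1).1 ((hmemA2 e).1 he.2).1 ((hmemA1 e).1 he.1).2
  · have hfin : (G.neighborSet u).Finite := Set.toFinite _
    have himg : A1 ∪ A2 ⊆ hfin.toFinset.image (fun y => s(u, y)) := by
      intro f hf
      have hf' : (f ∈ H1 ∨ f ∈ H2) ∧ u ∈ f := by
        rcases Finset.mem_union.1 hf with h | h
        · exact ⟨Or.inl ((hmemA1 f).1 h).1, ((hmemA1 f).1 h).2⟩
        · exact ⟨Or.inr ((hmemA2 f).1 h).1, ((hmemA2 f).1 h).2⟩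
      have hfG : f ∈ G.edgeSet := by
        rcases hf'.1 with h | h
        · exact hE1 f h
        · exact hE2 f h
      obtain ⟨y, hadj, rfl⟩ := edge_at hfG hf'.2
      exact Finset.mem_image.2 ⟨y, hfin.mem_toFinset.2 hadj, rfl⟩
    have hcard : A1.card + A2.card ≤ 3 := by
      rw [← Finset.card_union_of_disjoint (Finset.disjoint_iff_inter_eq_empty.2
        (Finset.not_nonempty_iff_eq_empty.1 hcom))]
      calc (A1 ∪ A2).card ≤ (hfin.toFinset.image (fun y => s(u, y))).card :=
            Finset.card_le_card himg
        _ ≤ hfin.toFinset.card := Finset.card_image_le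
        _ = (G.neighborSet u).ncard := (Set.ncard_eq_toFinset_card _ hfin).symm
        _ ≤ 3 := hsub u
    have hA1pos : 0 < A1.card := by
      obtain ⟨f, hf, huf⟩ := hu1
      exact Finset.card_pos.2 ⟨f, (hmemA1 f).2 ⟨hf, huf⟩⟩
    have hA2pos : 0 < A2.card := by
      obtain ⟨f, hf, huf⟩ := hu2
      exact Finset.card_pos.2 ⟨f, (hmemA2 f).2 ⟨hf, huf⟩⟩
    have hone : A1.card = 1 ∨ A2.card = 1 := by omega
    rcases hone with hone | hone
    · obtain ⟨e, hA1e⟩ := Finset.card_eq_one.1 hone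
      have heA1 : e ∈ A1 := hA1e ▸ Finset.mem_singleton_self e
      have he1 : e ∈ H1 := ((hmemA1 e).1 heA1).1
      have hue : u ∈ e := ((hmemA1 e).1 heA1).2
      have hall : ∀ f ∈ H1, u ∈ f → f = e := fun f hf huf =>
        Finset.mem_singleton.1 (hA1e ▸ (hmemA1 f).2 ⟨hf, huf⟩)
      have he2 : e ∉ H2 := fun h2 =>
        hcom ⟨e, Finset.mem_inter.2 ⟨heA1, (hmemA2 e).2 ⟨h2, hue⟩⟩⟩
      exact caseB hnl1 heven1 heven2 hconn1 hconn2 huv hu1 hu2 hv1 hv2 he1 hue hall he2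
    · obtain ⟨e, hA2e⟩ := Finset.card_eq_one.1 hone
      have heA2 : e ∈ A2 := hA2e ▸ Finset.mem_singleton_self e
      have he2 : e ∈ H2 := ((hmemA2 e).1 heA2).1
      have hue : u ∈ e := ((hmemA2 e).1 heA2).2
      have hall : ∀ f ∈ H2, u ∈ f → f = e := fun f hf huf =>
        Finset.mem_singleton.1 (hA2e ▸ (hmemA2 f).2 ⟨hf, huf⟩)
      have he1 : e ∉ H1 := fun h1 =>
        hcom ⟨e, Finset.mem_inter.2 ⟨(hmemA1 e).2 ⟨h1, hue⟩, heA2⟩⟩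
      rw [show H1 + H2 = H2 + H1 from add_comm _ _]
      exact caseB hnl2 heven2 heven1 hconn2 hconn1 huv hu2 hu1 hv2 hv1 he2 hue hall he1
end

section
/- Suppose removing edges u'u'' and v'v'' from graph G = (V,E) disconnects it into graphs G' = (V',E') and G'' = (V'',E'') with u',v' ∈ V' and u'',v'' ∈ V'', such that: (1) u'v' ∈ E and u''v'' ∉ E; (2) G' has a spanning connected Eulerian sub-multigraph with at most 4|V'|/3 − 2 edges; (3) G'' with the edge u''v'' added has a spanning connected Eulerian sub-multigraph with at most 4|V''|/3 − 2 edges. Then G has a spanning connected Eulerian sub-multigraph with at most 4|V|/3 − 2 edges. -/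
def IsSpanningEulerian {V : Type} (G : SimpleGraph V) (H : Multiset (Sym2 V)) : Prop :=
  (∀ e ∈ H, e ∈ G.edgeSet) ∧ (∀ v : V, 0 < mDegree H v) ∧
  (∀ v : V, Even (mDegree H v)) ∧ (∀ u v : V, (mGraph H).Reachable u v)

-- `mDegree` decides membership classically; lemmas about it are stated with the same instances.
open Classical

section Multigraph

variable {V W : Type}

lemma mDegree_add (A B : Multiset (Sym2 V)) (v : V) :
    mDegree (A + B) v = mDegree A v + mDegree B v := by
  simp [mDegree, Multiset.filter_add]

lemma mDegree_replicate (k : ℕ) (e : Sym2 V) (v : V) :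
    mDegree (Multiset.replicate k e) v = if v ∈ e then k else 0 := by
  unfold mDegree
  split_ifs with hv
  · rw [Multiset.filter_eq_self.2 fun x hx => (Multiset.eq_of_mem_replicate hx) ▸ hv,
      Multiset.card_replicate]
  · rw [Multiset.filter_eq_nil.2 fun x hx => (Multiset.eq_of_mem_replicate hx) ▸ hv,
      Multiset.card_zero]

lemma mDegree_singleton (e : Sym2 V) (v : V) : mDegree {e} v = if v ∈ e then 1 else 0 :=
  mDegree_replicate 1 e v

lemma mDegree_map {f : V → W} (hf : Function.Injective f) (A : Multiset (Sym2 V)) (v : V) :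
    mDegree (A.map (Sym2.map f)) (f v) = mDegree A v := by
  rw [mDegree, mDegree, Multiset.filter_map, Multiset.card_map]
  congr 1
  exact Multiset.filter_congr fun e _ => by simp [Sym2.mem_map, hf.eq_iff]

lemma mDegree_map_of_notMem_range {f : V → W} (A : Multiset (Sym2 V)) {w : W}
    (hw : w ∉ Set.range f) : mDegree (A.map (Sym2.map f)) w = 0 := by
  simp only [mDegree, Multiset.card_eq_zero, Multiset.filter_eq_nil, Multiset.mem_map]
  rintro _ ⟨e, -, rfl⟩ hwe
  obtain ⟨v, -, rfl⟩ := Sym2.mem_map.1 hwe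
  exact hw ⟨v, rfl⟩

lemma mDegree_pos_of_mem {A : Multiset (Sym2 V)} {e : Sym2 V} {v : V} (he : e ∈ A)
    (hv : v ∈ e) : 0 < mDegree A v :=
  Multiset.card_pos_iff_exists_mem.2 ⟨e, Multiset.mem_filter.2 ⟨he, hv⟩⟩

lemma mGraph_adj {A : Multiset (Sym2 V)} {a b : V} :
    (mGraph A).Adj a b ↔ s(a, b) ∈ A ∧ a ≠ b := by
  simp [mGraph]

lemma mGraph_mono {A B : Multiset (Sym2 V)} (h : A ⊆ B) : mGraph A ≤ mGraph B :=
  SimpleGraph.fromEdgeSet_mono fun _ he => h he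

lemma mDegree_pos_of_reachable {A : Multiset (Sym2 V)} {v w : V}
    (h : (mGraph A).Reachable v w) (hne : v ≠ w) : 0 < mDegree A v := by
  obtain ⟨p⟩ := h
  cases p with
  | nil => exact absurd rfl hne
  | cons hadj _ => exact mDegree_pos_of_mem (mGraph_adj.1 hadj).1 (Sym2.mem_mk_left _ _)

lemma SimpleGraph.Reachable.of_adj_reachable {G : SimpleGraph V} {G' : SimpleGraph W}
    (f : V → W) (h : ∀ a b, G.Adj a b → G'.Reachable (f a) (f b)) {a b : V}
    (hab : G.Reachable a b) : G'.Reachable (f a) (f b) := by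
  simp only [SimpleGraph.reachable_iff_reflTransGen] at hab h ⊢
  exact Relation.ReflTransGen.lift' f h _ _ hab

lemma mGraph_reachable_map {f : V → W} (hf : Function.Injective f) {A : Multiset (Sym2 V)}
    {a b : V} (h : (mGraph A).Reachable a b) :
    (mGraph (A.map (Sym2.map f))).Reachable (f a) (f b) :=
  h.of_adj_reachable f fun x y hxy => SimpleGraph.Adj.reachable <| mGraph_adj.2
    ⟨Sym2.map_mk f x y ▸ Multiset.mem_map_of_mem _ (mGraph_adj.1 hxy).1,
      hf.ne (mGraph_adj.1 hxy).2⟩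

end Multigraph

lemma exists_parity_replacement {V : Type} {G : SimpleGraph V} {a b c d : V}
    (hab : G.Adj a b) (hcd : G.Adj c d) (hac : G.Adj a c) (hbd : b ≠ d) (k : ℕ) :
    ∃ C : Multiset (Sym2 V), (∀ e ∈ C, e ∈ G.edgeSet) ∧ s(a, b) ∈ C ∧
      (k ≠ 0 → s(c, d) ∈ C) ∧
      (∀ x, Even (mDegree C x + mDegree (Multiset.replicate k s(b, d)) x)) ∧
      Multiset.card C ≤ k + 2 := by
  obtain rfl | hk0 := eq_or_ne k 0
  · refine ⟨Multiset.replicate 2 s(a, b), ?_, ?_, by simp, fun x => ?_, by simp⟩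
    · simpa [Multiset.mem_replicate] using hab
    · simp
    · simp only [mDegree_replicate]
      split_ifs <;> simp
  rcases Nat.even_or_odd k with hk | hk
  · refine ⟨Multiset.replicate 2 s(a, b) + Multiset.replicate 2 s(c, d), ?_, ?_, ?_,
      fun x => ?_, ?_⟩
    · simp only [Multiset.mem_add, Multiset.mem_replicate]
      rintro e (⟨-, rfl⟩ | ⟨-, rfl⟩)
      exacts [hab, hcd]
    · simp
    · simp
    · simp only [mDegree_add, mDegree_replicate]
      rw [Nat.even_iff] at hk ⊢
      split_ifs <;> omega
    · rw [Nat.even_iff] at hk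
      simp only [Multiset.card_add, Multiset.card_replicate]
      omega
  · -- the path `b a c d` has the endpoint parities of the edge `b d`
    refine ⟨{s(a, b), s(a, c), s(c, d)}, ?_, by simp, fun _ => by simp, fun x => ?_, ?_⟩
    · simp only [Multiset.insert_eq_cons, Multiset.mem_cons, Multiset.mem_singleton]
      rintro e (rfl | rfl | rfl)
      exacts [hab, hac, hcd]
    · simp only [Multiset.insert_eq_cons, ← Multiset.singleton_add, mDegree_add,
        mDegree_singleton, mDegree_replicate, Sym2.mem_iff]
      rw [Nat.odd_iff] at hk
      rw [Nat.even_iff]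
      split_ifs <;> grind [hab.ne, hac.ne, hcd.ne]
    · simp only [Multiset.insert_eq_cons, Multiset.card_cons, Multiset.card_singleton]
      omega

lemma Multiset.replicate_count_add_filter_ne {γ : Type} [DecidableEq γ] (s : Multiset γ)
    (e : γ) : Multiset.replicate (s.count e) e + s.filter (· ≠ e) = s := by
  rw [← Multiset.filter_eq']
  exact Multiset.filter_add_not _ s

section Glue

variable {α β : Type}

noncomputable def glue (H' : Multiset (Sym2 α)) (H'' : Multiset (Sym2 β)) (e : Sym2 β)
    (C : Multiset (Sym2 (α ⊕ β))) : Multiset (Sym2 (α ⊕ β)) :=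
  H'.map (Sym2.map Sum.inl) + (H''.filter (· ≠ e)).map (Sym2.map Sum.inr) + C

variable {H' : Multiset (Sym2 α)} {H'' : Multiset (Sym2 β)} {e : Sym2 β}
  {C : Multiset (Sym2 (α ⊕ β))}

lemma mem_glue {x : Sym2 (α ⊕ β)} : x ∈ glue H' H'' e C ↔
    x ∈ H'.map (Sym2.map Sum.inl) ∨ x ∈ (H''.filter (· ≠ e)).map (Sym2.map Sum.inr) ∨
      x ∈ C := by
  simp only [glue, Multiset.mem_add, or_assoc]

lemma card_glue : Multiset.card (glue H' H'' e C) + H''.count e =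
    Multiset.card H' + Multiset.card H'' + Multiset.card C := by
  conv_rhs => rw [← H''.replicate_count_add_filter_ne e]
  simp only [glue, Multiset.card_add, Multiset.card_map, Multiset.card_replicate]
  omega

lemma even_mDegree_glue (hH' : ∀ a, Even (mDegree H' a)) (hH'' : ∀ b, Even (mDegree H'' b))
    (hC : ∀ x, Even (mDegree C x +
      mDegree (Multiset.replicate (H''.count e) (e.map Sum.inr)) x)) (x : α ⊕ β) :
    Even (mDegree (glue H' H'' e C) x) := by
  set R := Multiset.replicate (H''.count e) (e.map Sum.inr)
  set L := H'.map (Sym2.map Sum.inl) + H''.map (Sym2.map Sum.inr)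
  have hL : Even (mDegree L x) := by
    rcases x with a | b
    · rw [mDegree_add, mDegree_map Sum.inl_injective,
        mDegree_map_of_notMem_range _ (by simp)]
      simpa using hH' a
    · rw [mDegree_add, mDegree_map Sum.inr_injective,
        mDegree_map_of_notMem_range _ (by simp)]
      simpa using hH'' b
  -- `L` is `glue H' H'' e R`, and `R` and `C` have the same degree parities
  have hsplit : mDegree (glue H' H'' e C) x + mDegree R x = mDegree L x + mDegree C x := by
    have : H''.map (Sym2.map Sum.inr) = R + (H''.filter (· ≠ e)).map (Sym2.map Sum.inr) := by
      conv_lhs => rw [← H''.replicate_count_add_filter_ne e]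
      rw [Multiset.map_add, Multiset.map_replicate]
    simp only [glue, L, this, mDegree_add]
    ring
  have := hC x
  rw [Nat.even_iff] at hL this ⊢
  omega

lemma glue_subset_edgeSet {G : SimpleGraph (α ⊕ β)} {G' : SimpleGraph α} {G'' : SimpleGraph β}
    (hG' : ∀ a b, G'.Adj a b → G.Adj (.inl a) (.inl b))
    (hG'' : ∀ a b, G''.Adj a b → G.Adj (.inr a) (.inr b))
    (hH' : ∀ x ∈ H', x ∈ G'.edgeSet)
    (hH'' : ∀ x ∈ H'', x ∈ (G'' ⊔ SimpleGraph.fromEdgeSet {e}).edgeSet)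
    (hC : ∀ x ∈ C, x ∈ G.edgeSet) :
    ∀ x ∈ glue H' H'' e C, x ∈ G.edgeSet := by
  intro x hx
  rcases mem_glue.1 hx with hx | hx | hx
  · obtain ⟨y, hy, rfl⟩ := Multiset.mem_map.1 hx
    exact SimpleGraph.Hom.map_mem_edgeSet (f := ⟨Sum.inl, hG' _ _⟩) (hH' y hy)
  · obtain ⟨y, hy, rfl⟩ := Multiset.mem_map.1 hx
    obtain ⟨hy, hne⟩ := Multiset.mem_filter.1 hy
    have hyG'' : y ∈ G''.edgeSet := by simpa [hne] using hH'' y hy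
    exact SimpleGraph.Hom.map_mem_edgeSet (f := ⟨Sum.inr, hG'' _ _⟩) hyG''
  · exact hC x hx

lemma reachable_glue {u' v' : α} {u'' v'' : β}
    (hH' : ∀ a a', (mGraph H').Reachable a a') (hH'' : ∀ b b', (mGraph H'').Reachable b b')
    (hu : s(.inl u', .inr u'') ∈ C) (hv : s(u'', v'') ∈ H'' → s(.inl v', .inr v'') ∈ C)
    (x y : α ⊕ β) : (mGraph (glue H' H'' s(u'', v'') C)).Reachable x y := by
  set H := glue H' H'' s(u'', v'') C
  have hleft : ∀ a a', (mGraph H).Reachable (.inl a) (.inl a') := fun a a' =>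
    (mGraph_reachable_map Sum.inl_injective (hH' a a')).mono
      (mGraph_mono fun _ hx => mem_glue.2 (.inl hx))
  have hbridge : ∀ {a b}, s(.inl a, .inr b) ∈ C → (mGraph H).Reachable (.inl a) (.inr b) :=
    fun h => (mGraph_adj.2 ⟨mem_glue.2 (.inr (.inr h)), Sum.inl_ne_inr⟩).reachable
  have hbypass : s(u'', v'') ∈ H'' → ∀ b ∈ s(u'', v''),
      (mGraph H).Reachable (.inr b) (.inl u') := by
    intro he b hb
    rcases Sym2.mem_iff.1 hb with rfl | rfl
    · exact (hbridge hu).symm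
    · exact (hbridge (hv he)).symm.trans (hleft v' u')
  have hright : ∀ b b', (mGraph H).Reachable (.inr b) (.inr b') := fun b b' =>
    (hH'' b b').of_adj_reachable Sum.inr fun y z hyz => by
      obtain ⟨hyzH, hne⟩ := mGraph_adj.1 hyz
      by_cases he : s(y, z) = s(u'', v'')
      · rw [he] at hyzH
        exact (hbypass hyzH y (he ▸ Sym2.mem_mk_left y z)).trans
          (hbypass hyzH z (he ▸ Sym2.mem_mk_right y z)).symm
      · refine (mGraph_adj.2 ⟨mem_glue.2 (.inr (.inl ?_)), Sum.inr_injective.ne hne⟩).reachable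
        exact Sym2.map_mk Sum.inr y z ▸
          Multiset.mem_map_of_mem _ (Multiset.mem_filter.2 ⟨hyzH, he⟩)
  have hroot : ∀ z, (mGraph H).Reachable z (.inl u') := by
    rintro (a | b)
    · exact hleft a u'
    · exact (hright b u'').trans (hbridge hu).symm
  exact (hroot x).trans (hroot y).symm

theorem isSpanningEulerian_glue {G : SimpleGraph (α ⊕ β)} {G' : SimpleGraph α}
    {G'' : SimpleGraph β} {u' v' : α} {u'' v'' : β}
    (hG' : ∀ a b, G'.Adj a b → G.Adj (.inl a) (.inl b))
    (hG'' : ∀ a b, G''.Adj a b → G.Adj (.inr a) (.inr b))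
    (hH' : IsSpanningEulerian G' H')
    (hH'' : IsSpanningEulerian (G'' ⊔ SimpleGraph.fromEdgeSet {s(u'', v'')}) H'')
    (hCG : ∀ x ∈ C, x ∈ G.edgeSet) (hu : s(.inl u', .inr u'') ∈ C)
    (hv : s(u'', v'') ∈ H'' → s(.inl v', .inr v'') ∈ C)
    (hpar : ∀ x, Even (mDegree C x +
      mDegree (Multiset.replicate (H''.count s(u'', v'')) s(.inr u'', .inr v'')) x)) :
    IsSpanningEulerian G (glue H' H'' s(u'', v'') C) := by
  obtain ⟨hE', -, hD', hR'⟩ := hH'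
  obtain ⟨hE'', -, hD'', hR''⟩ := hH''
  have hR := reachable_glue hR' hR'' hu hv
  refine ⟨glue_subset_edgeSet hG' hG'' hE' hE'' hCG, ?_, even_mDegree_glue hD' hD'' hpar, hR⟩
  rintro (a | b)
  · exact mDegree_pos_of_reachable (hR _ (.inr u'')) Sum.inl_ne_inr
  · exact mDegree_pos_of_reachable (hR _ (.inl u')) Sum.inr_ne_inl

end Glue

theorem stmt6_general {α β : Type} [Fintype α] [Fintype β]
    (G : SimpleGraph (α ⊕ β)) (u' v' : α) (u'' v'' : β)
    (hne'' : u'' ≠ v'')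
    (huu : G.Adj (.inl u') (.inr u'')) (hvv : G.Adj (.inl v') (.inr v''))
    (h1 : G.Adj (.inl u') (.inl v'))
    (G' : SimpleGraph α) (hG' : ∀ a b, G'.Adj a b ↔ G.Adj (.inl a) (.inl b))
    (G'' : SimpleGraph β) (hG'' : ∀ a b, G''.Adj a b ↔ G.Adj (.inr a) (.inr b))
    (H' : Multiset (Sym2 α)) (hH' : IsSpanningEulerian G' H')
    (hc' : 3 * Multiset.card H' + 6 ≤ 4 * Fintype.card α)
    (H'' : Multiset (Sym2 β))
    (hH'' : IsSpanningEulerian (G'' ⊔ SimpleGraph.fromEdgeSet {s(u'', v'')}) H'')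
    (hc'' : 3 * Multiset.card H'' + 6 ≤ 4 * Fintype.card β) :
    ∃ H : Multiset (Sym2 (α ⊕ β)), IsSpanningEulerian G H ∧
      3 * Multiset.card H + 6 ≤ 4 * Fintype.card (α ⊕ β) := by
  obtain ⟨C, hCG, hCu, hCv, hCpar, hCcard⟩ := exists_parity_replacement huu hvv h1
    (Sum.inr_injective.ne hne'') (H''.count s(u'', v''))
  refine ⟨glue H' H'' s(u'', v'') C, isSpanningEulerian_glue (fun a b => (hG' a b).1)
    (fun a b => (hG'' a b).1) hH' hH'' hCG hCu (fun h => hCv (Multiset.count_ne_zero.2 h))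
    hCpar, ?_⟩
  have hcard := card_glue (H' := H') (H'' := H'') (e := s(u'', v'')) (C := C)
  rw [Fintype.card_sum]
  omega

/-- If removing the two edges `u'u''`, `v'v''` disconnects `G` into `G'`
(on vertex set `α`, containing `u', v'`) and `G''` (on `β`, containing `u'', v''`),
with `u'v' ∈ E`, `u''v'' ∉ E`, `G'` has a spanning connected Eulerian sub-multigraph
with at most `4|V'|/3 - 2` edges and `G'' + u''v''` has one with at most `4|V''|/3 - 2`
edges, then `G` has one with at most `4|V|/3 - 2` edges. -/
theorem stmt6 {α β : Type} [Fintype α] [Fintype β]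
    (G : SimpleGraph (α ⊕ β)) (u' v' : α) (u'' v'' : β)
    (hne' : u' ≠ v') (hne'' : u'' ≠ v'')
    (hcross : ∀ a b, G.Adj (.inl a) (.inr b) → (a = u' ∧ b = u'') ∨ (a = v' ∧ b = v''))
    (huu : G.Adj (.inl u') (.inr u'')) (hvv : G.Adj (.inl v') (.inr v''))
    (h1 : G.Adj (.inl u') (.inl v')) (h2 : ¬ G.Adj (.inr u'') (.inr v''))
    (G' : SimpleGraph α) (hG' : ∀ a b, G'.Adj a b ↔ G.Adj (.inl a) (.inl b))
    (G'' : SimpleGraph β) (hG'' : ∀ a b, G''.Adj a b ↔ G.Adj (.inr a) (.inr b))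
    (H' : Multiset (Sym2 α)) (hH' : IsSpanningEulerian G' H')
    (hc' : 3 * Multiset.card H' + 6 ≤ 4 * Fintype.card α)
    (H'' : Multiset (Sym2 β))
    (hH'' : IsSpanningEulerian (G'' ⊔ SimpleGraph.fromEdgeSet {s(u'', v'')}) H'')
    (hc'' : 3 * Multiset.card H'' + 6 ≤ 4 * Fintype.card β) :
    ∃ H : Multiset (Sym2 (α ⊕ β)), IsSpanningEulerian G H ∧
      3 * Multiset.card H + 6 ≤ 4 * Fintype.card (α ⊕ β) :=
  stmt6_general G u' v' u'' v'' hne'' huu hvv h1 G' hG' G'' hG'' H' hH' hc' H'' hH'' hc''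
end

section
/- In a cubic graph G, given a perfect matching M and a spanning tree T with |M ∩ T| = p, removing M from G leaves a cycle cover of G with at most p + 1 cycles. -/
/-!
Since `M` is a perfect matching, removing it lowers every degree by one, so `G \ M` is
2-regular. The spanning tree `T` keeps `G \ (M \ T)` connected, and `G \ M` is obtained from it
by deleting the `p` edges of `M ∩ T`; deleting a single edge `xy` raises the number of components
by at most one, since every vertex that loses its connection to another is still joined to `x`
or to `y`.
-/

namespace SimpleGraph

variable {V : Type} {G : SimpleGraph V}

lemma neighborSet_deleteEdges_eq_diff_singleton {M : Set (Sym2 V)} {v w : V} (hvw : s(v, w) ∈ M)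
    (huniq : ∀ e ∈ M, v ∈ e → e = s(v, w)) :
    (G.deleteEdges M).neighborSet v = G.neighborSet v \ {w} := by
  ext u
  simp only [mem_neighborSet, deleteEdges_adj, Set.mem_sdiff, Set.mem_singleton_iff]
  refine and_congr_right fun _ => not_congr ⟨fun hvu => ?_, fun huw => huw ▸ hvw⟩
  exact Sym2.congr_right.mp (huniq _ hvu (Sym2.mem_mk_left v u))

lemma ncard_neighborSet_deleteEdges_of_perfect [Fintype V] [DecidableRel G.Adj]
    {M : Set (Sym2 V)} (hMsub : M ⊆ G.edgeSet) (hpm : ∀ v : V, ∃! e, e ∈ M ∧ v ∈ e)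
    (v : V) :
    ((G.deleteEdges M).neighborSet v).ncard = G.degree v - 1 := by
  obtain ⟨e, ⟨heM, hve⟩, huniq⟩ := hpm v
  obtain ⟨w, rfl⟩ := Sym2.mem_iff_exists.mp hve
  have hvw : w ∈ G.neighborSet v := hMsub heM
  rw [neighborSet_deleteEdges_eq_diff_singleton heM fun e he hv => huniq e ⟨he, hv⟩,
    Set.ncard_sdiff_singleton_of_mem hvw, Set.ncard_eq_toFinset_card', ← neighborFinset_def,
    card_neighborFinset_eq_degree]

variable {x y u v : V}

lemma Reachable.deleteEdges_singleton (h : G.Reachable u v) :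
    (G.deleteEdges {s(x, y)}).Reachable u v ∨ (G.deleteEdges {s(x, y)}).Reachable u x ∨
      (G.deleteEdges {s(x, y)}).Reachable u y := by
  obtain ⟨w⟩ := h
  induction w with
  | nil => exact Or.inl .rfl
  | @cons u a v hua _ ih =>
    by_cases hxy : s(u, a) = s(x, y)
    · rcases Sym2.eq_iff.mp hxy with ⟨rfl, -⟩ | ⟨rfl, -⟩
      · exact Or.inr (Or.inl .rfl)
      · exact Or.inr (Or.inr .rfl)
    · have hua' : (G.deleteEdges {s(x, y)}).Adj u a := deleteEdges_adj.mpr ⟨hua, hxy⟩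
      exact ih.imp hua'.reachable.trans (Or.imp hua'.reachable.trans hua'.reachable.trans)

lemma card_connectedComponent_deleteEdges_singleton_le [Finite V] (e : Sym2 V) :
    Nat.card (G.deleteEdges {e}).ConnectedComponent ≤ Nat.card G.ConnectedComponent + 1 := by
  classical
  induction e with
  | h x y =>
  set G' := G.deleteEdges {s(x, y)}
  -- Every component of `G'` other than that of `x` is a whole component of `G`.
  let f (c : G'.ConnectedComponent) : Option G.ConnectedComponent :=
    if c = G'.connectedComponentMk x then none else some (c.map (Hom.ofLE (deleteEdges_le _)))
  have reachable_of_ne {u v : V} (hu : ¬G'.Reachable u x) (hv : ¬G'.Reachable v x)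
      (huv : G.Reachable u v) : G'.Reachable u v := by
    rcases huv.deleteEdges_singleton (x := x) (y := y) with h | h | huy
    · exact h
    · exact absurd h hu
    rcases huv.symm.deleteEdges_singleton (x := x) (y := y) with h | h | hvy
    · exact h.symm
    · exact absurd h hv
    · exact huy.trans hvy.symm
  have hf : Function.Injective f := by
    refine ConnectedComponent.ind₂ fun u v huv => ?_
    by_cases hu : G'.connectedComponentMk u = G'.connectedComponentMk x <;>
      by_cases hv : G'.connectedComponentMk v = G'.connectedComponentMk x <;>
      simp only [f, hu, hv, if_true, if_false, reduceCtorEq, Option.some_inj] at huv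
    · rw [hu, hv]
    · rw [ConnectedComponent.eq] at hu hv ⊢
      exact reachable_of_ne hu hv (ConnectedComponent.exact huv)
  calc Nat.card G'.ConnectedComponent ≤ Nat.card (Option G.ConnectedComponent) :=
        Nat.card_le_card_of_injective f hf
    _ = Nat.card G.ConnectedComponent + 1 := Finite.card_option

lemma card_connectedComponent_deleteEdges_le [Finite V] [DecidableEq V] (S : Finset (Sym2 V)) :
    Nat.card (G.deleteEdges ↑S).ConnectedComponent ≤
      Nat.card G.ConnectedComponent + S.card := by
  induction S using Finset.induction_on with
  | empty => simp
  | @insert e S he ih =>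
    rw [Finset.coe_insert, Set.insert_eq, Set.union_comm, ← deleteEdges_deleteEdges,
      Finset.card_insert_of_notMem he]
    have := card_connectedComponent_deleteEdges_singleton_le (G := G.deleteEdges ↑S) e
    omega

lemma card_connectedComponent_deleteEdges_le_of_connected [Finite V] [DecidableEq V]
    {S T : Finset (Sym2 V)} (hTsub : ↑T ⊆ G.edgeSet)
    (hT : (fromEdgeSet (↑T : Set (Sym2 V))).Connected) :
    Nat.card (G.deleteEdges ↑S).ConnectedComponent ≤ (S ∩ T).card + 1 := by
  have hsplit : G.deleteEdges ↑S = (G.deleteEdges ↑(S \ T)).deleteEdges ↑(S ∩ T) := by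
    rw [deleteEdges_deleteEdges, ← Finset.coe_union, Finset.sdiff_union_inter]
  have hconn : (G.deleteEdges ↑(S \ T)).Connected := by
    refine hT.mono fun a b hab => ?_
    rw [fromEdgeSet_adj] at hab
    exact deleteEdges_adj.mpr ⟨hTsub hab.1, fun h => (Finset.mem_sdiff.mp h).2 hab.1⟩
  have hone : Nat.card (G.deleteEdges ↑(S \ T)).ConnectedComponent ≤ 1 :=
    Finite.card_le_one_iff_subsingleton.mpr hconn.preconnected.subsingleton_connectedComponent
  have := card_connectedComponent_deleteEdges_le (G := G.deleteEdges ↑(S \ T)) (S ∩ T)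
  rw [hsplit]
  omega

end SimpleGraph

theorem stmt15_general {V : Type} [Fintype V] [DecidableEq V] (G : SimpleGraph V) [DecidableRel G.Adj]
    (hcubic : ∀ v : V, G.degree v = 3)
    (M T : Finset (Sym2 V)) (hMsub : M ⊆ G.edgeFinset) (hTsub : T ⊆ G.edgeFinset)
    (hpm : ∀ v : V, ∃! e, e ∈ M ∧ v ∈ e)
    (htconn : (SimpleGraph.fromEdgeSet (↑T : Set (Sym2 V))).Connected)
    (p : ℕ) (hp : (M ∩ T).card = p) :
    (∀ v : V, ((G.deleteEdges (↑M : Set (Sym2 V))).neighborSet v).ncard = 2) ∧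
    Nat.card (G.deleteEdges (↑M : Set (Sym2 V))).ConnectedComponent ≤ p + 1 := by
  have hM : (↑M : Set (Sym2 V)) ⊆ G.edgeSet := by rwa [← G.coe_edgeFinset, Finset.coe_subset]
  have hT : (↑T : Set (Sym2 V)) ⊆ G.edgeSet := by rwa [← G.coe_edgeFinset, Finset.coe_subset]
  refine ⟨fun v => ?_,
    hp ▸ SimpleGraph.card_connectedComponent_deleteEdges_le_of_connected hT htconn⟩
  rw [SimpleGraph.ncard_neighborSet_deleteEdges_of_perfect hM hpm, hcubic]

/-- In a cubic graph `G` with perfect matching `M` and spanning tree `T`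
with `|M ∩ T| = p`, removing `M` leaves a cycle cover (2-regular spanning subgraph)
with at most `p + 1` cycles (connected components). -/
theorem stmt15 {V : Type} [Fintype V] [DecidableEq V] (G : SimpleGraph V) [DecidableRel G.Adj]
    (hcubic : ∀ v : V, G.degree v = 3)
    (M T : Finset (Sym2 V)) (hMsub : M ⊆ G.edgeFinset) (hTsub : T ⊆ G.edgeFinset)
    (hpm : ∀ v : V, ∃! e, e ∈ M ∧ v ∈ e)
    (htconn : (SimpleGraph.fromEdgeSet (↑T : Set (Sym2 V))).Connected)
    (htcard : T.card = Fintype.card V - 1)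
    (p : ℕ) (hp : (M ∩ T).card = p) :
    (∀ v : V, ((G.deleteEdges (↑M : Set (Sym2 V))).neighborSet v).ncard = 2) ∧
    Nat.card (G.deleteEdges (↑M : Set (Sym2 V))).ConnectedComponent ≤ p + 1 :=
  stmt15_general G hcubic M T hMsub hTsub hpm htconn p hp
end
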